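/- arXiv:2311.03583 — 5 statements merged into one kernel-verified Lean document; each statement's English description precedes it below -/
import Mathlib

section
/- There exists an n-vertex graph G with no 3-cycles and no 4-cycles such that s(G) = e(G) = f(n); i.e., the maximum of the score s over all n-vertex graphs equals f(n) and is attained by a feasible graph. -/
open Finset

open scoped Classical

noncomputable def edgeCount {V : Type} [Fintype V] (G : SimpleGraph V) : ℕ :=
  G.edgeFinset.card

noncomputable def triCount {V : Type} [Fintype V] [DecidableEq V] (G : SimpleGraph V) : ℕ :=
  (G.cliqueFinset 3).card

noncomputable def sqCount {V : Type} [Fintype V] [DecidableEq V] (G : SimpleGraph V) : ℕ :=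
  ((univ : Finset (V × V × V × V)).filter fun p =>
    p.1 ≠ p.2.1 ∧ p.1 ≠ p.2.2.1 ∧ p.1 ≠ p.2.2.2 ∧ p.2.1 ≠ p.2.2.1 ∧ p.2.1 ≠ p.2.2.2 ∧
      p.2.2.1 ≠ p.2.2.2 ∧ G.Adj p.1 p.2.1 ∧ G.Adj p.2.1 p.2.2.1 ∧ G.Adj p.2.2.1 p.2.2.2 ∧
      G.Adj p.2.2.2 p.1).card / 8

noncomputable def score {V : Type} [Fintype V] [DecidableEq V] (G : SimpleGraph V) : ℤ :=
  (edgeCount G : ℤ) - (triCount G : ℤ) - (sqCount G : ℤ)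

def noC3 {V : Type} (G : SimpleGraph V) : Prop := G.CliqueFree 3

def noC4 {V : Type} (G : SimpleGraph V) : Prop :=
  ∀ a b c d : V, a ≠ b → a ≠ c → a ≠ d → b ≠ c → b ≠ d → c ≠ d →
    G.Adj a b → G.Adj b c → G.Adj c d → ¬ G.Adj d a

noncomputable def extremalNum (n : ℕ) : ℕ :=
  ((univ : Finset (SimpleGraph (Fin n))).filter fun G => noC3 G ∧ noC4 G).sup edgeCount

noncomputable def gflip {V : Type} [DecidableEq V] (G : SimpleGraph V) (u v : V) : SimpleGraph V :=
  SimpleGraph.fromEdgeSet (symmDiff G.edgeSet {s(u, v)})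

/-!
Deleting an edge that lies on a triangle or a 4-cycle lowers `e` by one and destroys at least
one triangle or 4-cycle, so it does not lower the score. Repeating this, every graph is beaten
in score by a feasible one, whose score is its number of edges, hence at most `f(n)`; an extremal
feasible graph attains that value.
-/

namespace SimpleGraph

variable {V : Type} [Fintype V] [DecidableEq V] {G H : SimpleGraph V} {a b c d : V}

noncomputable def fourCycleTuples (G : SimpleGraph V) : Finset (V × V × V × V) :=
  (univ : Finset (V × V × V × V)).filter fun p =>
    p.1 ≠ p.2.1 ∧ p.1 ≠ p.2.2.1 ∧ p.1 ≠ p.2.2.2 ∧ p.2.1 ≠ p.2.2.1 ∧ p.2.1 ≠ p.2.2.2 ∧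
      p.2.2.1 ≠ p.2.2.2 ∧ G.Adj p.1 p.2.1 ∧ G.Adj p.2.1 p.2.2.1 ∧ G.Adj p.2.2.1 p.2.2.2 ∧
      G.Adj p.2.2.2 p.1

lemma sqCount_eq_card_fourCycleTuples_div (G : SimpleGraph V) :
    sqCount G = #G.fourCycleTuples / 8 := rfl

lemma fourCycleTuples_mono (h : G ≤ H) : G.fourCycleTuples ⊆ H.fourCycleTuples := by
  intro p hp
  simp only [fourCycleTuples, mem_filter, mem_univ, true_and] at hp ⊢
  obtain ⟨h₁, h₂, h₃, h₄, h₅, h₆, hab, hbc, hcd, hda⟩ := hp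
  exact ⟨h₁, h₂, h₃, h₄, h₅, h₆, h hab, h hbc, h hcd, h hda⟩

lemma triCount_mono (h : G ≤ H) : triCount G ≤ triCount H :=
  card_le_card (cliqueFinset_mono _ h)

lemma sqCount_mono (h : G ≤ H) : sqCount G ≤ sqCount H :=
  Nat.div_le_div_right (card_le_card (fourCycleTuples_mono h))

lemma triCount_eq_zero (h : noC3 G) : triCount G = 0 := by
  rwa [triCount, card_eq_zero, cliqueFinset_eq_empty_iff]

lemma sqCount_eq_zero (h : noC4 G) : sqCount G = 0 := by
  rw [sqCount_eq_card_fourCycleTuples_div, Nat.div_eq_zero_iff_lt (by norm_num)]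
  suffices G.fourCycleTuples = ∅ by simp [this]
  refine eq_empty_of_forall_notMem fun p hp => ?_
  simp only [fourCycleTuples, mem_filter, mem_univ, true_and] at hp
  obtain ⟨h₁, h₂, h₃, h₄, h₅, h₆, hab, hbc, hcd, hda⟩ := hp
  exact h _ _ _ _ h₁ h₂ h₃ h₄ h₅ h₆ hab hbc hcd hda

lemma score_eq_edgeCount (h₃ : noC3 G) (h₄ : noC4 G) : score G = edgeCount G := by
  simp [score, triCount_eq_zero h₃, sqCount_eq_zero h₄]

lemma edgeCount_deleteEdges_add_one (hab : G.Adj a b) :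
    edgeCount (G.deleteEdges {s(a, b)}) + 1 = edgeCount G := by
  have hmem : s(a, b) ∈ G.edgeFinset := by simpa using hab
  unfold edgeCount
  convert card_erase_add_one hmem using 3
  ext e
  simp only [mem_edgeFinset, edgeSet_deleteEdges, Set.mem_sdiff, Set.mem_singleton_iff,
    mem_erase]
  tauto

lemma triCount_deleteEdges_lt (hab : G.Adj a b) (hac : G.Adj a c) (hbc : G.Adj b c) :
    triCount (G.deleteEdges {s(a, b)}) < triCount G := by
  have htri : {a, b, c} ∈ G.cliqueFinset 3 := by
    rw [mem_cliqueFinset_iff, is3Clique_triple_iff]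
    exact ⟨hab, hac, hbc⟩
  have hbroken : {a, b, c} ∉ (G.deleteEdges {s(a, b)}).cliqueFinset 3 := by
    rw [mem_cliqueFinset_iff, is3Clique_triple_iff, deleteEdges_adj]
    exact fun h => h.1.2 rfl
  unfold triCount
  convert card_lt_card <| (ssubset_iff_of_subset (cliqueFinset_mono _ (deleteEdges_le _))).2
    ⟨_, htri, hbroken⟩

lemma sqCount_deleteEdges_lt (hab' : a ≠ b) (hac : a ≠ c) (had : a ≠ d) (hbc' : b ≠ c)
    (hbd : b ≠ d) (hcd' : c ≠ d) (hab : G.Adj a b) (hbc : G.Adj b c) (hcd : G.Adj c d)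
    (hda : G.Adj d a) : sqCount (G.deleteEdges {s(a, b)}) < sqCount G := by
  set G' := G.deleteEdges {s(a, b)}
  have hsub : G'.fourCycleTuples ⊆ G.fourCycleTuples := fourCycleTuples_mono (deleteEdges_le _)
  -- `sqCount` divides by the eight traversals of a 4-cycle; those of `a b c d` all use `ab`
  let traversals : Finset (V × V × V × V) := {(a, b, c, d), (b, c, d, a), (c, d, a, b),
    (d, a, b, c), (a, d, c, b), (d, c, b, a), (c, b, a, d), (b, a, d, c)}
  have hcard : #traversals = 8 := by
    simp [traversals, card_insert_of_notMem, Prod.ext_iff, hab', hac, had, hbc', hbd, hcd',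
      hab'.symm, hac.symm, had.symm, hbc'.symm, hbd.symm, hcd'.symm]
  have hlost : traversals ⊆ G.fourCycleTuples \ G'.fourCycleTuples := by
    simp only [traversals, insert_subset_iff, singleton_subset_iff]
    refine ⟨?_, ?_, ?_, ?_, ?_, ?_, ?_, ?_⟩ <;>
      simp [G', fourCycleTuples, hab, hbc, hcd, hda, hab.symm, hbc.symm, hcd.symm, hda.symm,
        hab', hac, had, hbc', hbd, hcd', hab'.symm, hac.symm, had.symm, hbc'.symm, hbd.symm,
        hcd'.symm]
  have h8 := card_le_card hlost
  rw [hcard, card_sdiff_of_subset hsub] at h8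
  have := card_le_card hsub
  rw [sqCount_eq_card_fourCycleTuples_div, sqCount_eq_card_fourCycleTuples_div]
  omega

lemma score_le_score_deleteEdges (hab : G.Adj a b)
    (h : triCount (G.deleteEdges {s(a, b)}) + sqCount (G.deleteEdges {s(a, b)}) <
      triCount G + sqCount G) :
    score G ≤ score (G.deleteEdges {s(a, b)}) := by
  have he := edgeCount_deleteEdges_add_one hab
  simp only [score]
  omega

lemma exists_adj_score_le_score_deleteEdges (h : ¬(noC3 G ∧ noC4 G)) :
    ∃ a b, G.Adj a b ∧ score G ≤ score (G.deleteEdges {s(a, b)}) := by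
  by_cases h₃ : noC3 G
  · have h₄ : ¬noC4 G := fun h₄ => h ⟨h₃, h₄⟩
    simp only [noC4, not_forall, not_not] at h₄
    obtain ⟨a, b, c, d, hab', hac, had, hbc', hbd, hcd', hab, hbc, hcd, hda⟩ := h₄
    refine ⟨a, b, hab, score_le_score_deleteEdges hab ?_⟩
    have := sqCount_deleteEdges_lt hab' hac had hbc' hbd hcd' hab hbc hcd hda
    have := triCount_mono (deleteEdges_le (G := G) {s(a, b)})
    omega
  · simp only [noC3, CliqueFree, not_forall, not_not, is3Clique_iff] at h₃
    obtain ⟨_, a, b, c, hab, hac, hbc, rfl⟩ := h₃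
    refine ⟨a, b, hab, score_le_score_deleteEdges hab ?_⟩
    have := triCount_deleteEdges_lt hab hac hbc
    have := sqCount_mono (deleteEdges_le (G := G) {s(a, b)})
    omega

lemma exists_noC3_noC4_score_le (G : SimpleGraph V) :
    ∃ G' : SimpleGraph V, noC3 G' ∧ noC4 G' ∧ score G ≤ score G' := by
  induction hk : edgeCount G using Nat.strong_induction_on generalizing G with
  | _ k ih =>
    by_cases hG : noC3 G ∧ noC4 G
    · exact ⟨G, hG.1, hG.2, le_rfl⟩
    obtain ⟨a, b, hab, hscore⟩ := exists_adj_score_le_score_deleteEdges hG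
    have he := edgeCount_deleteEdges_add_one hab
    obtain ⟨G', h₃, h₄, hG'⟩ := ih _ (by omega) (G.deleteEdges {s(a, b)}) rfl
    exact ⟨G', h₃, h₄, hscore.trans hG'⟩

end SimpleGraph

open SimpleGraph

lemma edgeCount_le_extremalNum {n : ℕ} {G : SimpleGraph (Fin n)} (h₃ : noC3 G) (h₄ : noC4 G) :
    edgeCount G ≤ extremalNum n :=
  le_sup (f := edgeCount) (by simp [h₃, h₄])

lemma exists_noC3_noC4_edgeCount_eq_extremalNum (n : ℕ) :
    ∃ G : SimpleGraph (Fin n), noC3 G ∧ noC4 G ∧ edgeCount G = extremalNum n := by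
  have hbot : (⊥ : SimpleGraph (Fin n)) ∈ univ.filter fun G => noC3 G ∧ noC4 G := by
    simp only [mem_filter, mem_univ, true_and]
    exact ⟨cliqueFree_bot (by norm_num), fun _ _ _ _ _ _ _ _ _ _ h => h.elim⟩
  obtain ⟨G, hG, hsup⟩ := exists_mem_eq_sup _ ⟨_, hbot⟩ edgeCount
  simp only [mem_filter, mem_univ, true_and] at hG
  exact ⟨G, hG.1, hG.2, hsup.symm⟩

theorem stmt_1 (n : ℕ) :
    ∃ G : SimpleGraph (Fin n), noC3 G ∧ noC4 G ∧ score G = (edgeCount G : ℤ) ∧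
      edgeCount G = extremalNum n ∧ ∀ H : SimpleGraph (Fin n), score H ≤ score G := by
  obtain ⟨G, h₃, h₄, hG⟩ := exists_noC3_noC4_edgeCount_eq_extremalNum n
  refine ⟨G, h₃, h₄, score_eq_edgeCount h₃ h₄, hG, fun H => ?_⟩
  obtain ⟨H', h₃', h₄', hH'⟩ := exists_noC3_noC4_score_le H
  calc score H ≤ score H' := hH'
    _ = edgeCount H' := score_eq_edgeCount h₃' h₄'
    _ ≤ extremalNum n := by exact_mod_cast edgeCount_le_extremalNum h₃' h₄'
    _ = score G := by rw [score_eq_edgeCount h₃ h₄, hG]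
end

section
/- Mantel's theorem: the maximum number of edges of an n-vertex triangle-free simple graph equals ⌊n²/4⌋. -/
/-! Mantel's theorem is Turán's theorem for triangles: the balanced complete bipartite graph
`turanGraph n 2` is extremal among triangle-free graphs, and it has `⌊n/2⌋ * ⌈n/2⌉ = ⌊n²/4⌋`
edges. -/

open Finset

open scoped Classical

namespace SimpleGraph

theorem card_edgeFinset_turanGraph_two (n : ℕ) : #(turanGraph n 2).edgeFinset = n ^ 2 / 4 := by
  rw [card_edgeFinset_turanGraph]
  rcases Nat.even_or_odd' n with ⟨k, rfl | rfl⟩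
  · rw [show 2 * k % 2 = 0 by omega, show (2 * k) ^ 2 = 4 * k ^ 2 by ring]
    simp
  · rw [show (2 * k + 1) % 2 = 1 by omega, show (2 * k + 1) ^ 2 = 4 * (k ^ 2 + k) + 1 by ring]
    norm_num [Nat.add_div]

theorem CliqueFree.card_edgeFinset_le_sq_div_four {V : Type*} [Fintype V] {G : SimpleGraph V}
    [DecidableRel G.Adj] (h : G.CliqueFree 3) : #G.edgeFinset ≤ Fintype.card V ^ 2 / 4 := by
  simpa only [← card_edgeFinset_turanGraph, card_edgeFinset_turanGraph_two] using
    CliqueFree.card_edgeFinset_le (r := 2) h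

end SimpleGraph

theorem stmt_6 (n : ℕ) :
    ((univ : Finset (SimpleGraph (Fin n))).filter fun G => G.CliqueFree 3).sup edgeCount
      = n ^ 2 / 4 := by
  apply le_antisymm
  · refine Finset.sup_le fun G hG => ?_
    simpa only [edgeCount, Fintype.card_fin] using
      (mem_filter.1 hG).2.card_edgeFinset_le_sq_div_four
  · have hT : SimpleGraph.turanGraph n 2 ∈ univ.filter fun G => G.CliqueFree 3 :=
      mem_filter.2 ⟨mem_univ _, SimpleGraph.turanGraph_cliqueFree two_pos⟩
    refine le_of_eq_of_le ?_ (le_sup hT)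
    rw [← SimpleGraph.card_edgeFinset_turanGraph_two, edgeCount]
    congr!
end

section
/- For all n ≥ 1, f(n) ≤ n·√(n-1)/2, where f(n) is the maximum number of edges among n-vertex graphs with no 3-cycles and no 4-cycles. -/
open Finset

open scoped Classical

/-! Count triples `(v, x, y)` with `x, y` neighbours of `v`; there are `∑ d(v)²` of them.
Sending `(v, x, x)` to the dart `(v, x)` and `(v, x, y)` with `x ≠ y` to the pair `(x, y)`, which
is a non-edge as there is no triangle and determines `v` as there is no 4-cycle, injects them into
ordered pairs of distinct vertices, so `∑ d(v)² ≤ n(n - 1)`. Cauchy–Schwarz then gives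
`(2e)² ≤ n ∑ d(v)² ≤ n²(n - 1)`. -/

variable {V : Type} {G : SimpleGraph V}

lemma noC4.eq_of_adj_of_adj (h : noC4 G) {x y v w : V} (hxy : x ≠ y) (hvx : G.Adj v x)
    (hvy : G.Adj v y) (hwx : G.Adj w x) (hwy : G.Adj w y) : v = w := by
  by_contra hvw
  exact h x v y w hvx.ne.symm hxy hwx.ne.symm hvy.ne hvw hwy.ne.symm hvx.symm hvy hwy.symm hwx

lemma sum_degree_sq_le [Fintype V] [DecidableEq V] [DecidableRel G.Adj] (h3 : noC3 G)
    (h4 : noC4 G) :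
    ∑ v, G.degree v ^ 2 ≤ Fintype.card V * Fintype.card V - Fintype.card V := by
  let pairs := univ.sigma fun v => G.neighborFinset v ×ˢ G.neighborFinset v
  let f : (Σ _ : V, V × V) → V × V := fun t => if t.2.1 = t.2.2 then (t.1, t.2.1) else t.2
  have hcard : #pairs = ∑ v, G.degree v ^ 2 := by
    simp [pairs, card_sigma, card_product, sq]
  rw [← hcard, ← card_univ, ← offDiag_card]
  refine card_le_card_of_injOn f ?_ ?_
  · rintro ⟨v, x, y⟩ ht
    simp only [pairs, coe_sigma, Set.mem_sigma_iff, mem_coe, mem_product,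
      SimpleGraph.mem_neighborFinset] at ht
    by_cases hxy : x = y
    · simpa [f, hxy] using ht.2.2.ne
    · simp [f, hxy]
  · rintro ⟨v, x, y⟩ ht ⟨w, x', y'⟩ ht' heq
    simp only [pairs, coe_sigma, Set.mem_sigma_iff, mem_coe, mem_product,
      SimpleGraph.mem_neighborFinset] at ht ht'
    obtain ⟨-, hvx, hvy⟩ := ht
    obtain ⟨-, hwx, hwy⟩ := ht'
    by_cases hxy : x = y <;> by_cases hxy' : x' = y' <;> simp only [f, hxy, hxy', if_true,
      if_false, Prod.mk.injEq] at heq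
    · obtain ⟨rfl, rfl⟩ := heq
      subst hxy hxy'
      rfl
    · obtain ⟨rfl, rfl⟩ := heq
      subst hxy
      exact absurd (SimpleGraph.is3Clique_triple_iff.mpr ⟨hwx, hwy, hvy⟩) (h3 _)
    · obtain ⟨rfl, rfl⟩ := heq
      subst hxy'
      exact absurd (SimpleGraph.is3Clique_triple_iff.mpr ⟨hvx, hvy, hwy⟩) (h3 _)
    · obtain ⟨rfl, rfl⟩ := heq
      obtain rfl := h4.eq_of_adj_of_adj hxy hvx hvy hwx hwy
      rfl

lemma sq_two_mul_edgeCount_le [Fintype V] [DecidableEq V] (h3 : noC3 G) (h4 : noC4 G) :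
    (2 * edgeCount G) ^ 2 ≤
      Fintype.card V * (Fintype.card V * Fintype.card V - Fintype.card V) :=
  calc (2 * edgeCount G) ^ 2 = (∑ v, G.degree v) ^ 2 := by
        rw [edgeCount, G.sum_degrees_eq_twice_card_edges]
    _ ≤ Fintype.card V * ∑ v, G.degree v ^ 2 := sq_sum_le_card_mul_sum_sq
    _ ≤ _ := Nat.mul_le_mul_left _ (sum_degree_sq_le h3 h4)

lemma edgeCount_le_mul_sqrt [Fintype V] [DecidableEq V] (h3 : noC3 G) (h4 : noC4 G) :
    (edgeCount G : ℝ) ≤ Fintype.card V * √(Fintype.card V - 1) / 2 := by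
  set n := Fintype.card V
  have hsq : (2 * edgeCount G : ℝ) ^ 2 ≤ (n : ℝ) ^ 2 * (n - 1) := by
    have h : (2 * edgeCount G) ^ 2 ≤ n * (n * n - n) := sq_two_mul_edgeCount_le h3 h4
    have := (Nat.cast_le (α := ℝ)).mpr h
    push_cast [Nat.cast_sub (Nat.le_mul_self n)] at this
    linarith
  have h2e : (2 * edgeCount G : ℝ) ≤ n * √(n - 1) :=
    calc (2 * edgeCount G : ℝ) ≤ √((n : ℝ) ^ 2 * (n - 1)) := Real.le_sqrt_of_sq_le hsq
      _ = n * √(n - 1) := by rw [Real.sqrt_mul (sq_nonneg _), Real.sqrt_sq n.cast_nonneg]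
  linarith

theorem stmt_7_general (n : ℕ) :
    (extremalNum n : ℝ) ≤ n * Real.sqrt ((n : ℝ) - 1) / 2 := by
  have hbound : 0 ≤ n * Real.sqrt ((n : ℝ) - 1) / 2 := by positivity
  refine (Nat.le_floor_iff hbound).mp (Finset.sup_le fun G hG => Nat.le_floor ?_)
  obtain ⟨h3, h4⟩ := (mem_filter.mp hG).2
  simpa using edgeCount_le_mul_sqrt h3 h4

theorem stmt_7 (n : ℕ) (hn : 1 ≤ n) :
    (extremalNum n : ℝ) ≤ n * Real.sqrt ((n : ℝ) - 1) / 2 :=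
  stmt_7_general n
end

section
/- f(10) = 15, witnessed by the Petersen graph: the Petersen graph has 10 vertices, 15 edges, and contains no 3-cycle or 4-cycle, and no 10-vertex graph with no 3- or 4-cycles has more than 15 edges. -/
/-!
In a graph without 3- and 4-cycles, the neighbourhood `N(v)` and the sets `N(u) \ {v}` for
`u ∈ N(v)` are pairwise disjoint subsets of `V \ {v}`, so `∑_{u ∈ N(v)} deg u ≤ n - 1`.
Summing over `v` gives `∑ deg² ≤ n (n - 1)`, and Cauchy–Schwarz turns this into
`(2e)² ≤ n² (n - 1)`; for `n = 10` this is `e ≤ 15`. The Petersen graph attains the bound,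
which is checked by evaluation.
-/

open Finset

open scoped Classical

noncomputable def petersen : SimpleGraph {s : Finset (Fin 5) // s.card = 2} :=
  SimpleGraph.fromRel (fun a b => Disjoint a.1 b.1)

namespace SimpleGraph

variable {V : Type} [Fintype V] {G : SimpleGraph V} [DecidableRel G.Adj]

lemma pairwiseDisjoint_erase_neighborFinset [DecidableEq V] (h4 : noC4 G) (v : V) :
    (G.neighborFinset v : Set V).PairwiseDisjoint fun u => (G.neighborFinset u).erase v := by
  intro u hu u' hu' huu'
  simp only [Function.onFun, Finset.disjoint_left, mem_erase, mem_neighborFinset]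
  rintro w ⟨hwv, huw⟩ ⟨-, hu'w⟩
  rw [coe_neighborFinset, mem_neighborSet] at hu hu'
  exact h4 v u w u' hu.ne hwv.symm hu'.ne huw.ne huu' hu'w.ne.symm hu huw hu'w.symm hu'.symm

lemma sum_degree_neighborFinset_le (h3 : G.CliqueFree 3) (h4 : noC4 G) (v : V) :
    ∑ u ∈ G.neighborFinset v, G.degree u ≤ Fintype.card V - 1 := by
  set N := G.neighborFinset v
  set R := N.biUnion fun u => (G.neighborFinset u).erase v
  have hdisj : Disjoint N R := by
    simp only [R, Finset.disjoint_left, mem_biUnion, mem_erase, mem_neighborFinset, not_exists,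
      not_and]
    intro w hw u hu _ huw
    exact isIndepSet_neighborSet_of_triangleFree G h3 v (by simpa [N] using hu)
      (by simpa [N] using hw) (G.ne_of_adj huw) huw
  have hsub : N ∪ R ⊆ univ.erase v := by
    intro w hw
    simp only [R, N, mem_union, mem_biUnion, mem_erase, mem_neighborFinset] at hw
    rcases hw with hw | ⟨u, -, hwv, -⟩
    · exact mem_erase.2 ⟨G.ne_of_adj hw |>.symm, mem_univ w⟩
    · exact mem_erase.2 ⟨hwv, mem_univ w⟩
  have hR : #R + #N = ∑ u ∈ N, G.degree u := by
    rw [card_biUnion (pairwiseDisjoint_erase_neighborFinset h4 v), card_eq_sum_ones N,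
      ← sum_add_distrib]
    refine sum_congr rfl fun u hu => ?_
    rw [card_erase_add_one (by simpa [N] using (mem_neighborFinset G v u).1 hu |>.symm),
      card_neighborFinset_eq_degree]
  calc ∑ u ∈ N, G.degree u = #(N ∪ R) := by rw [card_union_of_disjoint hdisj, ← hR, add_comm]
    _ ≤ #(univ.erase v) := card_le_card hsub
    _ = Fintype.card V - 1 := by rw [card_erase_of_mem (mem_univ v), card_univ]

lemma sum_sum_neighborFinset_degree :
    ∑ v, ∑ u ∈ G.neighborFinset v, G.degree u = ∑ v, G.degree v ^ 2 := by
  rw [sum_comm' (t' := univ) (s' := fun u => G.neighborFinset u) fun v u => by simp [adj_comm]]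
  simp [sq, card_neighborFinset_eq_degree]

lemma sum_degree_sq_le (h3 : G.CliqueFree 3) (h4 : noC4 G) :
    ∑ v, G.degree v ^ 2 ≤ Fintype.card V * (Fintype.card V - 1) := by
  rw [← sum_sum_neighborFinset_degree]
  calc ∑ v, ∑ u ∈ G.neighborFinset v, G.degree u ≤ ∑ _v : V, (Fintype.card V - 1) :=
        sum_le_sum fun v _ => sum_degree_neighborFinset_le h3 h4 v
    _ = Fintype.card V * (Fintype.card V - 1) := by rw [sum_const, card_univ, smul_eq_mul]

lemma sq_two_mul_card_edgeFinset_le (h3 : G.CliqueFree 3) (h4 : noC4 G) :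
    (2 * #G.edgeFinset) ^ 2 ≤ Fintype.card V ^ 2 * (Fintype.card V - 1) := by
  calc (2 * #G.edgeFinset) ^ 2 = (∑ v, G.degree v) ^ 2 := by rw [sum_degrees_eq_twice_card_edges]
    _ ≤ Fintype.card V * ∑ v, G.degree v ^ 2 :=
        card_univ (α := V) ▸ sq_sum_le_card_mul_sum_sq
    _ ≤ Fintype.card V * (Fintype.card V * (Fintype.card V - 1)) :=
        Nat.mul_le_mul_left _ (sum_degree_sq_le h3 h4)
    _ = Fintype.card V ^ 2 * (Fintype.card V - 1) := by ring

end SimpleGraph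

lemma noC4.of_embedding {V W : Type} {G : SimpleGraph V} {H : SimpleGraph W} (f : G ↪g H) (h : noC4 H) : noC4 G :=
  fun a b c d hab hac had hbc hbd hcd h1 h2 h3 h4 =>
    h (f a) (f b) (f c) (f d) (f.inj'.ne hab) (f.inj'.ne hac) (f.inj'.ne had) (f.inj'.ne hbc)
      (f.inj'.ne hbd) (f.inj'.ne hcd) (f.map_rel_iff.2 h1) (f.map_rel_iff.2 h2) (f.map_rel_iff.2 h3)
      (f.map_rel_iff.2 h4)

lemma edgeCount_eq_card_edgeFinset {V : Type} [Fintype V] (G : SimpleGraph V) [Fintype G.edgeSet] :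
    edgeCount G = #G.edgeFinset := by
  unfold edgeCount
  congr!

lemma edgeCount_le_extremalNum_s13 {V : Type} [Fintype V] {n : ℕ} (hV : Fintype.card V = n)
    {G : SimpleGraph V} (h3 : noC3 G) (h4 : noC4 G) : edgeCount G ≤ extremalNum n := by
  let e : Fin n ≃ V := (Fintype.equivFinOfCardEq hV).symm
  let iso : G.comap e.toEmbedding ≃g G := SimpleGraph.Iso.comap e G
  have hcount : edgeCount (G.comap e.toEmbedding) = edgeCount G := by
    rw [edgeCount_eq_card_edgeFinset, edgeCount_eq_card_edgeFinset, iso.card_edgeFinset_eq]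
  rw [← hcount]
  exact le_sup (mem_filter.2 ⟨mem_univ _, h3.comap iso.isContained,
    noC4.of_embedding iso.toEmbedding h4⟩)

lemma extremalNum_le {n m : ℕ} (h : ∀ G : SimpleGraph (Fin n), noC3 G → noC4 G → edgeCount G ≤ m) :
    extremalNum n ≤ m :=
  Finset.sup_le fun G hG => h G (mem_filter.1 hG).2.1 (mem_filter.1 hG).2.2

lemma edgeCount_le_fifteen {V : Type} [Fintype V] (hV : Fintype.card V = 10) (G : SimpleGraph V)
    (h3 : noC3 G) (h4 : noC4 G) : edgeCount G ≤ 15 := by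
  have h := SimpleGraph.sq_two_mul_card_edgeFinset_le h3 h4
  rw [hV, ← edgeCount_eq_card_edgeFinset] at h
  nlinarith

instance : DecidableRel petersen.Adj := fun a b =>
  decidable_of_iff _ (SimpleGraph.fromRel_adj _ a b).symm

lemma petersen_noC3 : noC3 petersen := by
  have htri : ∀ a b c, petersen.Adj a b → petersen.Adj a c → petersen.Adj b c → False := by decide
  intro s hs
  obtain ⟨a, b, c, hab, hac, hbc, -⟩ := SimpleGraph.is3Clique_iff.1 hs
  exact htri a b c hab hac hbc

-- With a smaller bound, instance search falls back to `Classical.propDecidable` and `decide` is stuck.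
set_option synthInstance.maxSize 400 in
lemma petersen_noC4 : noC4 petersen := by
  unfold noC4
  decide

lemma edgeCount_petersen : edgeCount petersen = 15 := by
  have h30 : #(univ.filter fun x : _ × _ => petersen.Adj x.1 x.2) = 30 := by decide
  have h := petersen.two_mul_card_edgeFinset
  rw [h30] at h
  rw [edgeCount_eq_card_edgeFinset]
  omega

theorem stmt_13 :
    Fintype.card {s : Finset (Fin 5) // s.card = 2} = 10 ∧
    edgeCount petersen = 15 ∧ noC3 petersen ∧ noC4 petersen ∧
    extremalNum 10 = 15 := by
  have hcard : Fintype.card {s : Finset (Fin 5) // s.card = 2} = 10 := by decide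
  refine ⟨hcard, edgeCount_petersen, petersen_noC3, petersen_noC4, le_antisymm ?_ ?_⟩
  · exact extremalNum_le fun G => edgeCount_le_fifteen (Fintype.card_fin 10) G
  · exact edgeCount_petersen ▸ edgeCount_le_extremalNum_s13 hcard petersen_noC3 petersen_noC4
end

section
/- If G is an n-vertex graph with no 4-cycles, then e(G) ≤ n(1 + √(4n-3))/4. -/
open Finset

open scoped Classical

lemma count_paths {n : ℕ} (G : SimpleGraph (Fin n)) (h4 : noC4 G) :
    ∑ v : Fin n, (G.degree v * G.degree v - G.degree v) ≤ n * n - n := by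
  have h1 : ∀ v : Fin n, (((univ : Finset (Fin n)).offDiag).filter
      (fun p : Fin n × Fin n => G.Adj v p.1 ∧ G.Adj v p.2)).card
      = G.degree v * G.degree v - G.degree v := by
    intro v
    rw [← SimpleGraph.card_neighborFinset_eq_degree, ← Finset.offDiag_card]
    congr 1
    ext p
    simp only [Finset.mem_filter, Finset.mem_offDiag, Finset.mem_univ, true_and,
      SimpleGraph.mem_neighborFinset]
    tauto
  calc ∑ v : Fin n, (G.degree v * G.degree v - G.degree v)
      = ∑ v : Fin n, (((univ : Finset (Fin n)).offDiag).filter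
          (fun p : Fin n × Fin n => G.Adj v p.1 ∧ G.Adj v p.2)).card := by
        exact (Finset.sum_congr rfl fun v _ => (h1 v).symm)
    _ = ∑ p ∈ (univ : Finset (Fin n)).offDiag,
        ((univ : Finset (Fin n)).filter (fun v => G.Adj v p.1 ∧ G.Adj v p.2)).card := by
        simp_rw [Finset.card_filter]
        exact Finset.sum_comm
    _ ≤ ∑ _p ∈ (univ : Finset (Fin n)).offDiag, 1 := by
        apply Finset.sum_le_sum
        intro p hp
        rw [Finset.card_le_one]
        intro a ha b hb
        simp only [Finset.mem_filter, Finset.mem_univ, true_and] at ha hb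
        by_contra hab
        rw [Finset.mem_offDiag] at hp
        exact h4 p.1 a p.2 b (ha.1.ne') hp.2.2 (hb.1.ne') (ha.2.ne) hab (hb.2.ne')
          ha.1.symm ha.2 hb.2.symm hb.1
    _ = n * n - n := by
        simp [Finset.offDiag_card]

theorem stmt_18 (n : ℕ) (G : SimpleGraph (Fin n)) (h4 : noC4 G) :
    (edgeCount G : ℝ) ≤ n * (1 + Real.sqrt (4 * (n : ℝ) - 3)) / 4 := by
  rcases Nat.eq_zero_or_pos n with hn | hn
  · subst hn
    have : edgeCount G = 0 := by
      simp [edgeCount, Finset.card_eq_zero, Finset.eq_empty_of_isEmpty]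
    simp [this]
  -- key counting inequality
  have key := count_paths G h4
  have hsq : ∑ v : Fin n, G.degree v * G.degree v ≤ n * n - n + ∑ v : Fin n, G.degree v := by
    have : ∑ v : Fin n, G.degree v * G.degree v
        = ∑ v : Fin n, ((G.degree v * G.degree v - G.degree v) + G.degree v) := by
      apply Finset.sum_congr rfl
      intro v _
      have : G.degree v ≤ G.degree v * G.degree v := by
        rcases Nat.eq_zero_or_pos (G.degree v) with h | h
        · simp [h]
        · exact Nat.le_mul_of_pos_left _ h
      omega
    rw [this, Finset.sum_add_distrib]
    omega
  have hhs : ∑ v : Fin n, G.degree v = 2 * edgeCount G :=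
    G.sum_degrees_eq_twice_card_edges
  -- Cauchy–Schwarz
  have hcs : ((∑ v : Fin n, G.degree v : ℕ) : ℝ) ^ 2
      ≤ (n : ℝ) * ∑ v : Fin n, ((G.degree v : ℝ)) ^ 2 := by
    have := sq_sum_le_card_mul_sum_sq (s := (univ : Finset (Fin n)))
      (f := fun v => ((G.degree v : ℝ)))
    simpa using this
  set e : ℝ := (edgeCount G : ℝ) with he
  have he0 : 0 ≤ e := by positivity
  have hn1 : (1 : ℝ) ≤ n := by exact_mod_cast hn
  have hsq' : ∑ v : Fin n, G.degree v * G.degree v ≤ n * n - n + 2 * edgeCount G := by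
    rw [← hhs]; exact hsq
  have hnn : n ≤ n * n := Nat.le_mul_of_pos_left _ hn
  have hsqR : ∑ v : Fin n, ((G.degree v : ℝ)) ^ 2 ≤ (n : ℝ) * n - n + 2 * e := by
    have h1 : ((∑ v : Fin n, G.degree v * G.degree v : ℕ) : ℝ)
        ≤ ((n * n - n + 2 * edgeCount G : ℕ) : ℝ) := Nat.cast_le.mpr hsq'
    rw [Nat.cast_add, Nat.cast_sub hnn] at h1
    have h2 : ((∑ v : Fin n, G.degree v * G.degree v : ℕ) : ℝ)
        = ∑ v : Fin n, ((G.degree v : ℝ)) ^ 2 := by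
      push_cast
      apply Finset.sum_congr rfl
      intro v _
      ring
    rw [h2] at h1
    push_cast at h1
    rw [he]
    linarith
  have hcs' : (2 * e) ^ 2 ≤ (n : ℝ) * ((n : ℝ) * n - n + 2 * e) := by
    have h2e : ((∑ v : Fin n, G.degree v : ℕ) : ℝ) = 2 * e := by
      rw [hhs]; push_cast; ring
    rw [h2e] at hcs
    exact hcs.trans (mul_le_mul_of_nonneg_left hsqR (by positivity))
  -- now algebra
  set s : ℝ := Real.sqrt (4 * (n : ℝ) - 3) with hs
  have hs0 : 0 ≤ s := Real.sqrt_nonneg _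
  have hs2 : s ^ 2 = 4 * (n : ℝ) - 3 := Real.sq_sqrt (by linarith)
  by_contra hcon
  push_neg at hcon
  have hnR : (0:ℝ) ≤ (n:ℝ) := by positivity
  have h1 : 0 < 4 * e - n - n * s := by nlinarith
  have h2 : 0 < 4 * e - n + n * s := by nlinarith [mul_nonneg hnR hs0]
  have h3 : (n:ℝ) ^ 2 * s ^ 2 = (n:ℝ) ^ 2 * (4 * (n:ℝ) - 3) := by rw [hs2]
  nlinarith [mul_pos h1 h2, h3, hcs']
end
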